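/- arXiv:1704.00687 — 4 statements merged into one kernel-verified Lean document; each statement's English description precedes it below -/
import Mathlib

section
/- Let F_X be an L×K fitting pattern over a field 𝔽, let m ≥ 1, let F_X^X be the X-pattern obtained from F_X by replacing every 1-entry with X, and let F_ext,X be the mL×mK pattern partitioned into m² blocks of size L×K whose diagonal blocks equal F_X and whose off-diagonal blocks equal F_X^X. (a) If G is an r×K matrix and D is an L×r matrix over 𝔽 such that DG fits F_X, then with G_ext = (G|G|…|G) (m horizontal copies of G) and D_ext the mL×r matrix consisting of m vertical copies of D, the product D_ext·G_ext fits F_ext,X; in particular, if G is a scalar linear index code for the problem of F_X, then G_ext is a scalar linear index code of the same length r for the problem of F_ext,X. (b) minrk(F_ext,X) = minrk(F_X), so F_ext,X is a rank-invariant extension of F_X. -/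
open Matrix

/-- A pattern entry: `some false` = 0, `some true` = 1, `none` = X. -/
abbrev PatEntry := Option Bool

/-- A matrix `M` fits a pattern `P` if `M` is `0` at every `0`-entry of `P`
and `1` at every `1`-entry of `P` (X-entries are unconstrained). -/
def Fits {L K 𝔽 : Type*} [Zero 𝔽] [One 𝔽]
    (P : Matrix L K PatEntry) (M : Matrix L K 𝔽) : Prop :=
  ∀ i j, (P i j = some false → M i j = 0) ∧ (P i j = some true → M i j = 1)

/-- The minrank of a pattern over the field `𝔽`. -/
noncomputable def minrk (𝔽 : Type*) [Field 𝔽] {L K : Type*} [Fintype K]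
    (P : Matrix L K PatEntry) : ℕ :=
  sInf {n | ∃ M : Matrix L K 𝔽, Fits P M ∧ M.rank = n}

lemma rank_comp_le {𝔽 : Type*} [Field 𝔽] {L K L' K' : Type*}
    [Fintype L] [Fintype K] [Fintype K'] [DecidableEq L] [DecidableEq K]
    (N : Matrix L K 𝔽) (f : L' → L) (g : K' → K) :
    (Matrix.of fun p q => N (f p) (g q)).rank ≤ N.rank := by
  have hNC : (Matrix.of fun p q => N (f p) (g q)) =
      (Matrix.of fun (p : L') (i : L) => if f p = i then (1 : 𝔽) else 0) *
        (N * Matrix.of fun (j : K) (q : K') => if j = g q then (1 : 𝔽) else 0) := by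
    ext p q
    simp [Matrix.mul_apply]
  rw [hNC]
  exact le_trans (Matrix.rank_mul_le_right _ _) (Matrix.rank_mul_le_left _ _)

/-- The `m`-order extension whose diagonal blocks are `FX` and whose off-diagonal
blocks are `FX` with the `1`s replaced by `X`s:
(a) if `D * G` fits `FX` then `Dext * Gext` (vertical/horizontal copies) fits `Fext`;
in particular every index code `G` of length `r` for `FX` yields an index code of
length `r` for `Fext`; (b) `minrk Fext = minrk FX`, i.e. the extension is
rank-invariant. -/
theorem m_order_extension {L K m r : ℕ} (𝔽 : Type*) [Field 𝔽] (hm : 1 ≤ m)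
    (FX : Matrix (Fin L) (Fin K) PatEntry)
    (Fext : Matrix (Fin m × Fin L) (Fin m × Fin K) PatEntry)
    (hFext : ∀ a i b j, Fext (a, i) (b, j) =
      if a = b then FX i j else (if FX i j = some true then none else FX i j)) :
    (∀ (G : Matrix (Fin r) (Fin K) 𝔽) (D : Matrix (Fin L) (Fin r) 𝔽),
        Fits FX (D * G) →
        Fits Fext
          ((Matrix.of fun (p : Fin m × Fin L) (t : Fin r) => D p.2 t) *
            (Matrix.of fun (t : Fin r) (q : Fin m × Fin K) => G t q.2))) ∧
    (∀ G : Matrix (Fin r) (Fin K) 𝔽,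
        (∃ D : Matrix (Fin L) (Fin r) 𝔽, Fits FX (D * G)) →
        ∃ Dext : Matrix (Fin m × Fin L) (Fin r) 𝔽,
          Fits Fext (Dext * Matrix.of fun (t : Fin r) (q : Fin m × Fin K) => G t q.2)) ∧
    minrk 𝔽 Fext = minrk 𝔽 FX := by
  -- the key "extension fits" fact
  have key : ∀ M : Matrix (Fin L) (Fin K) 𝔽, Fits FX M →
      Fits Fext (Matrix.of fun (p : Fin m × Fin L) (q : Fin m × Fin K) => M p.2 q.2) := by
    intro M hM ⟨a, i⟩ ⟨b, j⟩
    rw [hFext]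
    by_cases hab : a = b
    · simpa [hab] using hM i j
    · simp only [hab, if_false]
      rcases hFX : FX i j with _ | b'
      · simp
      · rcases b' with _ | _
        · simpa using (hM i j).1 hFX
        · simp
  have parta : ∀ (G : Matrix (Fin r) (Fin K) 𝔽) (D : Matrix (Fin L) (Fin r) 𝔽),
      Fits FX (D * G) →
      Fits Fext
        ((Matrix.of fun (p : Fin m × Fin L) (t : Fin r) => D p.2 t) *
          (Matrix.of fun (t : Fin r) (q : Fin m × Fin K) => G t q.2)) := by
    intro G D h
    have heq : ((Matrix.of fun (p : Fin m × Fin L) (t : Fin r) => D p.2 t) *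
        (Matrix.of fun (t : Fin r) (q : Fin m × Fin K) => G t q.2)) =
        Matrix.of fun (p : Fin m × Fin L) (q : Fin m × Fin K) => (D * G) p.2 q.2 := by
      ext p q; simp [Matrix.mul_apply]
    rw [heq]
    exact key _ h
  refine ⟨parta, fun G ⟨D, hD⟩ =>
    ⟨Matrix.of fun (p : Fin m × Fin L) (t : Fin r) => D p.2 t, parta G D hD⟩, ?_⟩
  -- part (b)
  have ne1 : {n | ∃ M : Matrix (Fin L) (Fin K) 𝔽, Fits FX M ∧ M.rank = n}.Nonempty := by
    refine ⟨_, Matrix.of (fun i j => if FX i j = some true then (1 : 𝔽) else 0), ?_, rfl⟩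
    intro i j
    constructor <;> intro h <;> simp [h]
  have ne2 : {n | ∃ M : Matrix (Fin m × Fin L) (Fin m × Fin K) 𝔽,
      Fits Fext M ∧ M.rank = n}.Nonempty := by
    obtain ⟨n, M, hM, hr⟩ := ne1
    exact ⟨_, _, key M hM, rfl⟩
  apply le_antisymm
  · -- minrk Fext ≤ minrk FX
    obtain ⟨M, hM, hr⟩ := Nat.sInf_mem ne1
    calc minrk 𝔽 Fext ≤ (Matrix.of fun (p : Fin m × Fin L) (q : Fin m × Fin K) =>
          M p.2 q.2).rank := Nat.sInf_le ⟨_, key M hM, rfl⟩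
      _ ≤ M.rank := rank_comp_le M Prod.snd Prod.snd
      _ = minrk 𝔽 FX := hr
  · -- minrk FX ≤ minrk Fext
    obtain ⟨N, hN, hr⟩ := Nat.sInf_mem ne2
    have a0 : Fin m := ⟨0, hm⟩
    have hfit : Fits FX (Matrix.of fun (i : Fin L) (j : Fin K) => N (a0, i) (a0, j)) := by
      intro i j
      have := hN (a0, i) (a0, j)
      rwa [hFext, if_pos rfl] at this
    calc minrk 𝔽 FX ≤ (Matrix.of fun (i : Fin L) (j : Fin K) => N (a0, i) (a0, j)).rank :=
          Nat.sInf_le ⟨_, hfit, rfl⟩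
      _ ≤ N.rank := rank_comp_le N (fun i => (a0, i)) (fun j => (a0, j))
      _ = minrk 𝔽 Fext := hr
end

section
/- Let G and A be r×K matrices over a field 𝔽 and let G' be the 2r×2K block matrix (G A; A G) (first block row (G A), second block row (A G)). If rank(G') = rank(G) = r, then there exists an r×r matrix C over 𝔽 such that A = C·G and C² = I (C is involutory). -/
/-!
The top block row `(G A)` has rank between `rank G = r` and `rank (G A; A G) = r`, so the
bottom block row `(A G)` lies in its row space: `(A G) = C (G A)`, i.e. `A = C G` and `G = C A`.
Then `C² G = C A = G`, and `G` has independent rows, so `C² = 1`.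
-/

open Matrix

namespace Matrix

variable {l m n R : Type*} [Field R] [Fintype m] [Fintype n]

theorem mul_left_injective_of_rank_eq_card {G : Matrix m n R} (hG : G.rank = Fintype.card m) :
    Function.Injective fun X : Matrix l m R => X * G := by
  have hrows : LinearIndependent R G.row := by
    rw [linearIndependent_iff_card_eq_finrank_span, Set.finrank, ← rank_eq_finrank_span_row, hG]
  intro X Y hXY
  funext i
  exact vecMul_injective_iff.mpr hrows (congrFun hXY i)

theorem exists_eq_mul_of_rank_fromRows_le [Fintype l] {T : Matrix m n R} {B : Matrix l n R}
    (h : (fromRows T B).rank ≤ T.rank) : ∃ C : Matrix l m R, B = C * T := by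
  have hspan : Submodule.span R (Set.range T.row) =
      Submodule.span R (Set.range (fromRows T B).row) := by
    refine Submodule.eq_of_le_of_finrank_le (Submodule.span_mono ?_) ?_
    · rintro _ ⟨i, rfl⟩
      exact ⟨Sum.inl i, rfl⟩
    · rwa [← rank_eq_finrank_span_row, ← rank_eq_finrank_span_row]
  have hrow (i : l) : B i ∈ LinearMap.range T.vecMulLinear := by
    rw [range_vecMulLinear, hspan]
    exact Submodule.subset_span ⟨Sum.inr i, rfl⟩
  choose c hc using hrow
  exact ⟨of c, funext fun i => (hc i).symm⟩

end Matrix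

/-- If the block matrix `(G A; A G)` has the same rank `r` as the full-row-rank
`r × K` matrix `G`, then `A = C * G` for some involutory matrix `C`. -/
theorem exists_involutory_of_blocks_rank {r K : ℕ} {𝔽 : Type*} [Field 𝔽]
    (G A : Matrix (Fin r) (Fin K) 𝔽)
    (hrank : (Matrix.fromBlocks G A A G).rank = r) (hG : G.rank = r) :
    ∃ C : Matrix (Fin r) (Fin r) 𝔽, A = C * G ∧ C * C = 1 := by
  have hG_le : G.rank ≤ (fromCols G A).rank := rank_submatrix_le (fromCols G A) id Sum.inl
  obtain ⟨C, hC⟩ : ∃ C : Matrix (Fin r) (Fin r) 𝔽, fromCols A G = C * fromCols G A := by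
    refine exists_eq_mul_of_rank_fromRows_le ?_
    rw [fromRows_fromCols_eq_fromBlocks]
    omega
  obtain ⟨hA, hGA⟩ := (fromCols_ext_iff _ _ _ _).mp (hC.trans (mul_fromCols C G A))
  refine ⟨C, hA, mul_left_injective_of_rank_eq_card (by simpa using hG) ?_⟩
  simp only [Matrix.mul_assoc, ← hA, ← hGA, Matrix.one_mul]
end

section
/- Let F_X be an L×K fitting pattern and B an L×K X-pattern over a field 𝔽. Let G be an r×K matrix, D an L×r matrix, and C an r×r matrix with C² = I. Assume that DG fits F_X and that DCG fits B. Then the 2L×r matrix D' obtained by stacking D on top of DC satisfies: D'·(G | CG) fits the 2L×2K block pattern (F_X B; B F_X); in particular, (G | CG) is a scalar linear index code of length r for the problem of the pattern (F_X B; B F_X). Moreover, if r = minrk(F_X), then minrk((F_X B; B F_X)) = minrk(F_X), i.e., the extension is rank-invariant. -/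
open Matrix

/-- A pattern is an X-pattern if it has no `1`-entries. -/
def IsXPat {L K : Type*} (P : Matrix L K PatEntry) : Prop :=
  ∀ i j, P i j ≠ some true

/-!
Since `C * C = 1`, the product `(D; DC) (G | CG)` is the block matrix `(DG DCG; DCG DG)`, which
fits `(FX B; B FX)` blockwise; its rank is at most `r`. Conversely `FX` is the top-left block of
`(FX B; B FX)`, and restricting to a submatrix can only lower rank, so
`minrk FX ≤ minrk (FX B; B FX) ≤ r`.
-/

section Fits

variable {L K L₀ K₀ 𝔽 : Type*}

theorem Fits.submatrix [Zero 𝔽] [One 𝔽] {P : Matrix L K PatEntry} {M : Matrix L K 𝔽}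
    (h : Fits P M) (f : L₀ → L) (g : K₀ → K) : Fits (P.submatrix f g) (M.submatrix f g) :=
  fun i j => h (f i) (g j)

theorem Fits.fromBlocks [Zero 𝔽] [One 𝔽] {P₁₁ P₁₂ P₂₁ P₂₂ : Matrix L K PatEntry}
    {A₁₁ A₁₂ A₂₁ A₂₂ : Matrix L K 𝔽} (h₁₁ : Fits P₁₁ A₁₁) (h₁₂ : Fits P₁₂ A₁₂)
    (h₂₁ : Fits P₂₁ A₂₁) (h₂₂ : Fits P₂₂ A₂₂) :
    Fits (Matrix.fromBlocks P₁₁ P₁₂ P₂₁ P₂₂) (Matrix.fromBlocks A₁₁ A₁₂ A₂₁ A₂₂) := by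
  rintro (i | i) (j | j)
  exacts [h₁₁ i j, h₁₂ i j, h₂₁ i j, h₂₂ i j]

theorem exists_fits [Zero 𝔽] [One 𝔽] (P : Matrix L K PatEntry) : ∃ M : Matrix L K 𝔽, Fits P M :=
  ⟨of fun i j => if P i j = some true then 1 else 0, fun i j =>
    ⟨fun h => by simp [h], fun h => by simp [h]⟩⟩

end Fits

section Minrk

variable {L K L₀ K₀ : Type*} [Fintype K] {𝔽 : Type*} [Field 𝔽]

theorem minrk_le_rank {P : Matrix L K PatEntry} {M : Matrix L K 𝔽} (h : Fits P M) :
    minrk 𝔽 P ≤ M.rank :=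
  Nat.sInf_le ⟨M, h, rfl⟩

-- Every pattern is fitted by some matrix, so the `sInf` in `minrk` is attained, never `sInf ∅ = 0`.
theorem exists_fits_rank_eq_minrk (P : Matrix L K PatEntry) :
    ∃ M : Matrix L K 𝔽, Fits P M ∧ M.rank = minrk 𝔽 P :=
  let ⟨M, hM⟩ := exists_fits (𝔽 := 𝔽) P
  Nat.sInf_mem (s := {n | ∃ M : Matrix L K 𝔽, Fits P M ∧ M.rank = n}) ⟨M.rank, M, hM, rfl⟩

theorem minrk_submatrix_le [Fintype K₀] (P : Matrix L K PatEntry) (f : L₀ → L) (g : K₀ → K) :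
    minrk 𝔽 (P.submatrix f g) ≤ minrk 𝔽 P := by
  obtain ⟨M, hM, hrank⟩ := exists_fits_rank_eq_minrk (𝔽 := 𝔽) P
  calc minrk 𝔽 (P.submatrix f g) ≤ (M.submatrix f g).rank := minrk_le_rank (hM.submatrix f g)
    _ ≤ M.rank := M.rank_submatrix_le f g
    _ = minrk 𝔽 P := hrank

end Minrk

theorem fromRows_mul_fromCols_of_mul_self_eq_one {L K r R : Type*} [Fintype r] [DecidableEq r]
    [Semiring R] {C : Matrix r r R} (hC : C * C = 1) (D : Matrix L r R) (G : Matrix r K R) :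
    fromRows D (D * C) * fromCols G (C * G) =
      fromBlocks (D * G) (D * C * G) (D * C * G) (D * G) := by
  rw [fromRows_mul_fromCols, ← Matrix.mul_assoc (D * C) C G, Matrix.mul_assoc D C C, hC,
    Matrix.mul_one, Matrix.mul_assoc D C G]

theorem two_order_extension_of_involutory_general {L K r : ℕ} (𝔽 : Type*) [Field 𝔽]
    (FX B : Matrix (Fin L) (Fin K) PatEntry)
    (G : Matrix (Fin r) (Fin K) 𝔽) (D : Matrix (Fin L) (Fin r) 𝔽)
    (C : Matrix (Fin r) (Fin r) 𝔽) (hC : C * C = 1)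
    (hDG : Fits FX (D * G)) (hDCG : Fits B (D * C * G)) :
    Fits (Matrix.fromBlocks FX B B FX)
      (Matrix.fromRows D (D * C) * Matrix.fromCols G (C * G)) ∧
    (∃ D' : Matrix (Fin L ⊕ Fin L) (Fin r) 𝔽,
        Fits (Matrix.fromBlocks FX B B FX) (D' * Matrix.fromCols G (C * G))) ∧
    (r = minrk 𝔽 FX →
        minrk 𝔽 (Matrix.fromBlocks FX B B FX) = minrk 𝔽 FX) := by
  have hfits : Fits (fromBlocks FX B B FX) (fromRows D (D * C) * fromCols G (C * G)) := by
    rw [fromRows_mul_fromCols_of_mul_self_eq_one hC]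
    exact hDG.fromBlocks hDCG hDCG hDG
  refine ⟨hfits, ⟨_, hfits⟩, fun hr => le_antisymm ?_ ?_⟩
  · calc minrk 𝔽 (fromBlocks FX B B FX) ≤ (fromRows D (D * C) * fromCols G (C * G)).rank :=
          minrk_le_rank hfits
      _ ≤ r := (rank_mul_le_left _ _).trans ((rank_le_card_width _).trans_eq (Fintype.card_fin r))
      _ = minrk 𝔽 FX := hr
  · have hFX : (fromBlocks FX B B FX).submatrix Sum.inl Sum.inl = FX := Matrix.ext fun _ _ => rfl
    exact hFX ▸ minrk_submatrix_le _ Sum.inl Sum.inl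

/-- If `D * G` fits `FX`, `C` is involutory and `D * C * G` fits the X-pattern `B`, then
`(D; DC) * (G | CG)` fits the block pattern `(FX B; B FX)`; in particular `(G | CG)`
is a scalar linear index code of length `r` for the extension, and if `r = minrk FX`
then the extension is rank-invariant. -/
theorem two_order_extension_of_involutory {L K r : ℕ} (𝔽 : Type*) [Field 𝔽]
    (FX B : Matrix (Fin L) (Fin K) PatEntry) (hXpat : IsXPat B)
    (G : Matrix (Fin r) (Fin K) 𝔽) (D : Matrix (Fin L) (Fin r) 𝔽)
    (C : Matrix (Fin r) (Fin r) 𝔽) (hC : C * C = 1)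
    (hDG : Fits FX (D * G)) (hDCG : Fits B (D * C * G)) :
    Fits (Matrix.fromBlocks FX B B FX)
      (Matrix.fromRows D (D * C) * Matrix.fromCols G (C * G)) ∧
    (∃ D' : Matrix (Fin L ⊕ Fin L) (Fin r) 𝔽,
        Fits (Matrix.fromBlocks FX B B FX) (D' * Matrix.fromCols G (C * G))) ∧
    (r = minrk 𝔽 FX →
        minrk 𝔽 (Matrix.fromBlocks FX B B FX) = minrk 𝔽 FX) :=
  two_order_extension_of_involutory_general 𝔽 FX B G D C hC hDG hDCG
end

section
/- Let σ be an involution of {1,…,r} with permutation matrix C over a field 𝔽. Let I_1,…,I_T be pairwise disjoint subsets of {1,…,K}, each of size r, enumerated by bijections b_i : {1,…,r} → I_i. Let F_X be an L×K fitting pattern, G an r×K matrix, and D an L×r matrix with DG fitting F_X; suppose that for each i ∈ {1,…,T} the r×r matrix A_i whose k-th column is the b_i(k)-th column of G commutes with C. Define the L×K X-pattern B whose entry at (l, j) is 0 if j = b_i(k) for some i and k with F_X(l, b_i(σ(k))) = 0, and X otherwise. Then the matrix D·C·G fits B. -/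
open Matrix

open Classical in
/-- Suppose `D * G` fits `FX` and, for each of the disjoint column blocks
`I_i = range (b i)`, the `r × r` submatrix `A_i` of `G` commutes with the
permutation matrix `C` of the involution `σ`.  Then `D * C * G` fits the
X-pattern `B` obtained from `FX` by permuting the columns within each block
according to `σ`, filling the remaining columns with `X`, and X-ing out the `1`s. -/
theorem dcg_fits_permuted_pattern {L K r T : ℕ} {𝔽 : Type*} [Field 𝔽]
    (σ : Equiv.Perm (Fin r)) (hσ : ∀ i, σ (σ i) = i)
    (C : Matrix (Fin r) (Fin r) 𝔽)
    (hC : ∀ i j, C i j = if i = σ j then 1 else 0)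
    (b : Fin T → Fin r → Fin K)
    (hb : Function.Injective fun p : Fin T × Fin r => b p.1 p.2)
    (FX : Matrix (Fin L) (Fin K) PatEntry)
    (G : Matrix (Fin r) (Fin K) 𝔽) (D : Matrix (Fin L) (Fin r) 𝔽)
    (hDG : Fits FX (D * G))
    (hcomm : ∀ i : Fin T,
      (Matrix.of fun s k => G s (b i k)) * C = C * Matrix.of fun s k => G s (b i k))
    (B : Matrix (Fin L) (Fin K) PatEntry)
    (hBdef : ∀ l j, B l j =
      if ∃ i k, j = b i k ∧ FX l (b i (σ k)) = some false then some false else none) :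
    Fits B (D * C * G) := by
  intro l j
  rw [hBdef]
  constructor
  · intro hB
    split_ifs at hB with h
    obtain ⟨i, k, rfl, hF⟩ := h
    have key : ∀ s, G (σ s) (b i k) = G s (b i (σ k)) := by
      intro s
      have h1 := congrFun (congrFun (hcomm i) s) k
      simp only [Matrix.mul_apply, Matrix.of_apply, hC, mul_ite, ite_mul, mul_one, one_mul,
        mul_zero, zero_mul] at h1
      rw [Finset.sum_ite_eq' Finset.univ (σ k)] at h1
      simp only [Finset.mem_univ, if_true] at h1
      have h2 : (∑ x, if s = σ x then G x (b i k) else 0) = G (σ s) (b i k) := by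
        rw [Finset.sum_eq_single (σ s)]
        · simp [hσ]
        · intro x _ hx
          rw [if_neg]
          intro hsx
          exact hx (by rw [hsx, hσ])
        · simp
      exact (h1.trans h2).symm
    have hDC : ∀ t, (D * C) l t = D l (σ t) := by
      intro t
      simp [Matrix.mul_apply, hC]
    have hsum : (D * C * G) l (b i k) = (D * G) l (b i (σ k)) := by
      simp only [Matrix.mul_apply, hDC]
      rw [← Equiv.sum_comp σ (fun t => D l (σ t) * G t (b i k))]
      simp only [hσ, key]
    rw [hsum]
    exact (hDG l (b i (σ k))).1 hF
  · intro hB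
    split_ifs at hB <;> simp_all
end
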